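/- Interpreting a monomial A ∈ M_x^y (x ∈ ℕ^p, y ∈ ℕ^q) as an arrow in the positive integer lattice ℕ² from (|x|, q) to (p, |y|), the upsilon product A·B of a block transverse pair is represented by the composite arrow running from the initial point of B to the terminal point of A; in particular the initial point of A coincides with the terminal point of B. -/
import Mathlib


/-- `ys, xs` form a block decomposition of the pair `A ⊗ B ∈ M_v^y ⊗ M_x^u`
into transverse pairs. -/
def IsBTPDecomp (u v x y : List ℕ) (ys xs : List (List ℕ)) : Prop :=
  ys.flatten = y ∧ xs.flatten = x ∧
  ys.map List.length = u ∧ xs.map List.length = v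

/-- A monomial in `M_x^y` is interpreted as the arrow in `ℕ²` from `(|x|, q)`
to `(p, |y|)`; this is its initial point. -/
def arrowStart (x y : List ℕ) : ℕ × ℕ := (x.sum, y.length)

/-- The terminal point `(p, |y|)` of the arrow representing a monomial in `M_x^y`. -/
def arrowEnd (x y : List ℕ) : ℕ × ℕ := (x.length, y.sum)

/-- For a block transverse pair `A ⊗ B ∈ M_v^y ⊗ M_x^u` with block decomposition
`ys, xs`, the product `A·B`, a monomial in
`M_{(|x_1|,…,|x_s|)}^{(|y_1|,…,|y_t|)}`, is represented by the arrow running from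
the initial point of `B` to the terminal point of `A`; in particular, the initial
point of `A` coincides with the terminal point of `B`. -/
theorem upsilon_arrow (u v x y : List ℕ) (ys xs : List (List ℕ))
    (h : IsBTPDecomp u v x y ys xs) :
    arrowStart (xs.map List.sum) (ys.map List.sum) = arrowStart x u ∧
    arrowEnd (xs.map List.sum) (ys.map List.sum) = arrowEnd v y ∧
    arrowStart v y = arrowEnd x u := by
  obtain ⟨hy, hx, hu, hv⟩ := h
  subst hy hx hu hv
  refine ⟨?_, ?_, ?_⟩ <;>
    simp [arrowStart, arrowEnd, ← List.sum_flatten, List.length_flatten]
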